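/- For n ≥ 5, let t₀ = [n−1, n, n, …, n] (mapping 1 to n−1 and everything else to n), let U¹ be the transformations t of Q = {1,…,n} with (n−1)t = nt = n, 1 ∉ rng(t), and 1t = n, and let U³ be those with (n−1)t = nt = n, 1t ∉ {n−1,n}, 1 ∉ rng(t), and it ∈ {n−1,n} for all i ≠ 1. Then U¹ ∪ {t₀} ∪ U³ is a semigroup of cardinality (n−1)^{n−3} + (n−3)·2^{n−3} + 1. -/

import Mathlib

/-!
Every `u ∈ U = U¹ ∪ {t₀} ∪ U³` sends `n - 1` and `n` to `n` and misses `1`. So for `s ∈ U¹`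
and `t ∈ U` the map `t ∘ s` is again in `U¹`. If instead `s = t₀` or `s ∈ U³`, then `s` maps
every state other than `1` into `{n - 1, n}`, so `t ∘ s` sends all of them to `n` and sends `1`
somewhere other than `1`; such a map lies in `U¹`, equals `t₀`, or lies in `U³` according as the
image of `1` is `n`, `n - 1`, or neither.

Both `U¹` and `U³` are products of independent choices per state: `U¹` has `n - 1` choices at
each of the `n - 3` states outside `{1, n - 1, n}`, and `U³` has `n - 3` choices for `1t` and
two at each of those states.
-/

/-- `t ∈ U¹_n`: `(n-1)t = nt = n`, `1 ∉ rng t`, and `1t = n`.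
States `{1,…,n}` are encoded as `Fin n` (state `i` ↦ index `i-1`). -/
def UOne (n : ℕ) (t : Fin n → Fin n) : Prop :=
  (∀ q : Fin n, q.val = n - 2 ∨ q.val = n - 1 → (t q).val = n - 1) ∧
  (∀ q : Fin n, (t q).val ≠ 0) ∧
  (∀ q : Fin n, q.val = 0 → (t q).val = n - 1)

/-- `t ∈ U³_n`: `(n-1)t = nt = n`, `1 ∉ rng t`, `1t ∉ {n-1, n}`, and
`it ∈ {n-1, n}` for all `i ≠ 1`. -/
def UThree (n : ℕ) (t : Fin n → Fin n) : Prop :=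
  (∀ q : Fin n, q.val = n - 2 ∨ q.val = n - 1 → (t q).val = n - 1) ∧
  (∀ q : Fin n, (t q).val ≠ 0) ∧
  (∀ q : Fin n, q.val = 0 → (t q).val ≠ n - 2 ∧ (t q).val ≠ n - 1) ∧
  (∀ i : Fin n, i.val ≠ 0 → (t i).val = n - 2 ∨ (t i).val = n - 1)

/-- `t₀ = [n-1, n, n, …, n]`: maps state `1` to `n-1` and everything else to `n`. -/
def tZero (n : ℕ) (hn : 2 ≤ n) : Fin n → Fin n :=
  fun q => if q.val = 0 then ⟨n - 2, by omega⟩ else ⟨n - 1, by omega⟩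

open Finset

variable {n : ℕ} {s t u : Fin n → Fin n}

def MemU (n : ℕ) (hn : 2 ≤ n) (u : Fin n → Fin n) : Prop :=
  UOne n u ∨ u = tZero n hn ∨ UThree n u

def Admissible (n : ℕ) (u : Fin n → Fin n) : Prop :=
  (∀ q : Fin n, q.val = n - 2 ∨ q.val = n - 1 → (u q).val = n - 1) ∧
  ∀ q : Fin n, (u q).val ≠ 0

theorem UOne.admissible (h : UOne n u) : Admissible n u := ⟨h.1, h.2.1⟩

theorem UThree.admissible (h : UThree n u) : Admissible n u := ⟨h.1, h.2.1⟩

theorem tZero_val_of_ne_zero (hn : 2 ≤ n) {q : Fin n} (hq : q.val ≠ 0) :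
    (tZero n hn q).val = n - 1 := by
  simp [tZero, hq]

theorem tZero_val_zero (hn : 2 ≤ n) : (tZero n hn ⟨0, by omega⟩).val = n - 2 := by
  simp [tZero]

theorem tZero_val_ne_zero (hn : 3 ≤ n) (q : Fin n) : (tZero n (by omega) q).val ≠ 0 := by
  unfold tZero; split <;> simp only <;> omega

theorem admissible_tZero (hn : 3 ≤ n) : Admissible n (tZero n (by omega)) :=
  ⟨fun _ hq => tZero_val_of_ne_zero _ (by omega), tZero_val_ne_zero hn⟩

theorem MemU.admissible (hn : 3 ≤ n) (h : MemU n (by omega) u) : Admissible n u := by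
  rcases h with h | rfl | h
  exacts [UOne.admissible h, admissible_tZero hn, UThree.admissible h]

theorem UOne.comp (ht : Admissible n t) (hs : UOne n s) : UOne n (t ∘ s) :=
  ⟨fun q hq => ht.1 _ (.inr (hs.1 q hq)), fun q => ht.2 (s q),
    fun q hq => ht.1 _ (.inr (hs.2.2 q hq))⟩

theorem memU_of_forall_ne_zero (hn : 3 ≤ n)
    (hrest : ∀ q : Fin n, q.val ≠ 0 → (u q).val = n - 1) (hfirst : (u ⟨0, by omega⟩).val ≠ 0) :
    MemU n (by omega) u := by
  have hzero : ∀ q : Fin n, q.val = 0 → q = ⟨0, by omega⟩ := fun q h => Fin.ext h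
  have hne : ∀ q : Fin n, (u q).val ≠ 0 := fun q => by
    by_cases h : q.val = 0
    · rw [hzero q h]; exact hfirst
    · rw [hrest q h]; omega
  have htail : ∀ q : Fin n, q.val = n - 2 ∨ q.val = n - 1 → (u q).val = n - 1 :=
    fun q hq => hrest q (by omega)
  by_cases hlast : (u ⟨0, by omega⟩).val = n - 1
  · exact .inl ⟨htail, hne, fun q hq => hzero q hq ▸ hlast⟩
  by_cases hpen : (u ⟨0, by omega⟩).val = n - 2
  · refine .inr (.inl (funext fun q => Fin.ext ?_))
    by_cases h : q.val = 0
    · rw [hzero q h, hpen, tZero_val_zero]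
    · rw [hrest q h, tZero_val_of_ne_zero _ h]
  · exact .inr (.inr ⟨htail, hne, fun q hq => hzero q hq ▸ ⟨hpen, hlast⟩,
      fun q hq => .inr (hrest q hq)⟩)

theorem memU_comp_of_forall_ne_zero (hn : 3 ≤ n) (ht : Admissible n t)
    (hs : ∀ q : Fin n, q.val ≠ 0 → (s q).val = n - 2 ∨ (s q).val = n - 1) :
    MemU n (by omega) (t ∘ s) :=
  memU_of_forall_ne_zero hn (fun q hq => ht.1 _ (hs q hq)) (ht.2 _)

theorem MemU.comp (hn : 3 ≤ n) (hs : MemU n (by omega) s) (ht : MemU n (by omega) t) :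
    MemU n (by omega) (t ∘ s) := by
  have ht := ht.admissible hn
  rcases hs with hs | rfl | hs
  · exact .inl (UOne.comp ht hs)
  · exact memU_comp_of_forall_ne_zero hn ht fun q hq => .inr (tZero_val_of_ne_zero _ hq)
  · exact memU_comp_of_forall_ne_zero hn ht hs.2.2.2

def specialStates (n : ℕ) : Finset (Fin n) := {i | i.val = 0 ∨ i.val = n - 2 ∨ i.val = n - 1}

theorem card_specialStates (hn : 3 ≤ n) : #(specialStates n) = 3 := by
  have : specialStates n = {⟨0, by omega⟩, ⟨n - 2, by omega⟩, ⟨n - 1, by omega⟩} := by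
    ext i; simp [specialStates, Fin.ext_iff]
  rw [this, card_insert_of_notMem (by simp [Fin.ext_iff]; omega),
    card_pair (by simp [Fin.ext_iff]; omega)]

theorem setOf_uOne_eq_piFinset (hn : 3 ≤ n) :
    {t | UOne n t} = ↑(Fintype.piFinset fun i : Fin n =>
      if i ∈ specialStates n then {(⟨n - 1, by omega⟩ : Fin n)} else {⟨0, by omega⟩}ᶜ) := by
  ext t
  simp only [Set.mem_ofPred_eq, mem_coe, Fintype.mem_piFinset, UOne, specialStates, mem_filter,
    mem_univ, true_and]
  constructor
  · rintro ⟨htail, hne, hfirst⟩ i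
    split_ifs with hi
    · exact mem_singleton.2 (Fin.ext (hi.elim (hfirst i) (htail i)))
    · simpa [Fin.ext_iff] using hne i
  · intro h
    have hspecial : ∀ i : Fin n, (i.val = 0 ∨ i.val = n - 2 ∨ i.val = n - 1) →
        (t i).val = n - 1 := fun i hi => by simpa [hi, Fin.ext_iff] using h i
    refine ⟨fun i hi => hspecial i (.inr hi), fun i => ?_, fun i hi => hspecial i (.inl hi)⟩
    by_cases hi : i.val = 0 ∨ i.val = n - 2 ∨ i.val = n - 1
    · rw [hspecial i hi]; omega
    · simpa [hi, Fin.ext_iff] using h i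

theorem ncard_setOf_uOne (hn : 3 ≤ n) : {t | UOne n t}.ncard = (n - 1) ^ (n - 3) := by
  rw [setOf_uOne_eq_piFinset hn, Set.ncard_coe_finset, Fintype.card_piFinset]
  simp only [apply_ite card, card_singleton, card_compl, Fintype.card_fin, prod_ite,
    prod_const_one, one_mul, prod_const, filter_notMem_eq_sdiff, card_univ_sdiff,
    card_specialStates hn]

theorem setOf_uThree_eq_piFinset (hn : 3 ≤ n) :
    {t | UThree n t} = ↑(Fintype.piFinset fun i : Fin n =>
      if i ∈ specialStates n then
        (if i.val = 0 then (specialStates n)ᶜ else {⟨n - 1, by omega⟩})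
      else {⟨n - 2, by omega⟩, ⟨n - 1, by omega⟩}) := by
  ext t
  simp only [Set.mem_ofPred_eq, mem_coe, Fintype.mem_piFinset, UThree, specialStates, mem_filter,
    mem_univ, true_and]
  constructor
  · rintro ⟨htail, hne, hfirst, hrest⟩ i
    split_ifs with hi h0
    · simpa [hne i] using hfirst i h0
    · exact mem_singleton.2 (Fin.ext (htail i (hi.resolve_left h0)))
    · simpa [Fin.ext_iff] using hrest i (fun h0 => hi (.inl h0))
  · intro h
    have hfirst : ∀ i : Fin n, i.val = 0 →
        ¬((t i).val = 0 ∨ (t i).val = n - 2 ∨ (t i).val = n - 1) := fun i h0 => by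
      simpa [h0] using h i
    have hrest : ∀ i : Fin n, i.val ≠ 0 → (t i).val = n - 2 ∨ (t i).val = n - 1 :=
        fun i h0 => by
      by_cases hi : i.val = n - 2 ∨ i.val = n - 1
      · exact .inr (by simpa [hi, h0, Fin.ext_iff] using h i)
      · simpa [hi, h0, Fin.ext_iff] using h i
    refine ⟨fun i hi => ?_, fun i => ?_, fun i h0 => ?_, hrest⟩
    · simpa [hi, show i.val ≠ 0 by omega, Fin.ext_iff] using h i
    · by_cases h0 : i.val = 0
      · exact fun h => hfirst i h0 (.inl h)
      · have := hrest i h0; omega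
    · have := hfirst i h0; omega

theorem ncard_setOf_uThree (hn : 3 ≤ n) : {t | UThree n t}.ncard = (n - 3) * 2 ^ (n - 3) := by
  rw [setOf_uThree_eq_piFinset hn, Set.ncard_coe_finset, Fintype.card_piFinset]
  simp only [apply_ite card, card_singleton, card_compl, Fintype.card_fin, prod_ite,
    prod_const, filter_notMem_eq_sdiff, card_univ_sdiff, card_specialStates hn, filter_univ_mem,
    one_pow, mul_one, card_pair (show (⟨n - 2, by omega⟩ : Fin n) ≠ ⟨n - 1, by omega⟩ by
      simp [Fin.ext_iff]; omega)]
  have hzero : {x ∈ specialStates n | x.val = 0} = {⟨0, by omega⟩} := by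
    ext x; simp [specialStates, Fin.ext_iff]; omega
  rw [hzero, card_singleton, pow_one]

theorem UOne.ne_tZero (hn : 2 ≤ n) (h : UOne n u) : u ≠ tZero n hn := by
  rintro rfl
  have := h.2.2 ⟨0, by omega⟩ rfl
  rw [tZero_val_zero] at this
  omega

theorem UOne.not_uThree (hn : 0 < n) (h : UOne n u) : ¬UThree n u :=
  fun h3 => (h3.2.2.1 ⟨0, hn⟩ rfl).2 (h.2.2 _ rfl)

theorem not_uThree_tZero (hn : 2 ≤ n) : ¬UThree n (tZero n hn) :=
  fun h => (h.2.2.1 ⟨0, by omega⟩ rfl).1 (tZero_val_zero hn)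

theorem ncard_setOf_memU (hn : 3 ≤ n) :
    {t | MemU n (by omega) t}.ncard = (n - 1) ^ (n - 3) + (n - 3) * 2 ^ (n - 3) + 1 := by
  have hU : {t | MemU n (by omega) t} =
      {t | UOne n t} ∪ ({tZero n (by omega)} ∪ {t | UThree n t}) := rfl
  rw [hU, Set.ncard_union_eq ?_ (Set.toFinite _) (Set.toFinite _),
    Set.ncard_union_eq ?_ (Set.toFinite _) (Set.toFinite _), ncard_setOf_uOne hn,
    ncard_setOf_uThree hn, Set.ncard_singleton]
  · ring
  · exact Set.disjoint_singleton_left.2 (not_uThree_tZero _)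
  · rw [Set.disjoint_union_right, Set.disjoint_singleton_right]
    exact ⟨fun h => UOne.ne_tZero _ h rfl,
      Set.disjoint_left.2 fun _ h => UOne.not_uThree (by omega) h⟩

/-- For `n ≥ 5`, `U¹ ∪ {t₀} ∪ U³` is closed under composition and has cardinality
`(n-1)^(n-3) + (n-3)·2^(n-3) + 1`. -/
theorem statement14 (n : ℕ) (hn : 5 ≤ n) :
    (∀ s t : Fin n → Fin n,
      (UOne n s ∨ s = tZero n (by omega) ∨ UThree n s) →
      (UOne n t ∨ t = tZero n (by omega) ∨ UThree n t) →
      (UOne n (t ∘ s) ∨ (t ∘ s) = tZero n (by omega) ∨ UThree n (t ∘ s))) ∧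
    Nat.card {t : Fin n → Fin n // UOne n t ∨ t = tZero n (by omega) ∨ UThree n t} =
      (n - 1) ^ (n - 3) + (n - 3) * 2 ^ (n - 3) + 1 :=
  ⟨fun _ _ hs ht => MemU.comp (by omega) hs ht,
    (Nat.card_coe_set_eq _).trans (ncard_setOf_memU (by omega))⟩
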